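/- The functions ψ and φ are Lipschitz, strictly increasing bijections of ℝ, and for a.e. x ∈ ℝ: ψ'(x) = (μ^0(x) − λ̄^0_−)/(μ^0(x) − λ^0(x)) and φ'(x) = (μ̄^0_+ − λ^0(x))/(μ^0(x) − λ^0(x)); in particular both derivatives are bounded below by the positive constant (inf μ^0 − sup λ^0)/(sup μ^0 − inf λ^0), so the inverse functions of ψ and φ are Lipschitz and strictly increasing on ℝ. -/

import Mathlib

/-!
`Z0` is a primitive of `ρ = 2a / (μ⁰ - λ⁰)`, which lies between two positive
constants, so `Z0` and its inverse `X0` are Lipschitz. Since the Lipschitz map `X0`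
sends null sets to null sets, `H` is differentiable at `Z0 x` with derivative
`λ⁰(x) - λ̄` for a.e. `x`, and the chain rule gives
`ψ' = 1 + (λ⁰ - λ̄) / (μ⁰ - λ⁰) = (μ⁰ - λ̄) / (μ⁰ - λ⁰)` a.e.; likewise for `φ`.
These derivatives are at least `m = (inf μ⁰ - sup λ⁰) / (sup μ⁰ - inf λ⁰) > 0`.
A Lipschitz function is absolutely continuous, hence the integral of its derivative,
so `ψ v - ψ u ≥ m (v - u)` for `u ≤ v`: `ψ` is a strictly increasing surjection
whose inverse is `m⁻¹`-Lipschitz.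
-/

open MeasureTheory Filter Set Function

section Primitive

variable {g : ℝ → ℝ} {C : ℝ}

lemma locallyIntegrable_of_abs_le (hg : AEStronglyMeasurable g) (hC : ∀ x, |g x| ≤ C) :
    LocallyIntegrable g :=
  (locallyIntegrable_const C).mono hg
    (ae_of_all _ fun x => by simpa only [Real.norm_eq_abs] using (hC x).trans (le_abs_self C))

lemma lipschitzWith_primitive (hg : AEStronglyMeasurable g) (hC : ∀ x, |g x| ≤ C) (c : ℝ) :
    LipschitzWith C.toNNReal fun y => ∫ t in c..y, g t := by
  have hint (u v : ℝ) : IntervalIntegrable g volume u v :=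
    ((locallyIntegrable_of_abs_le hg hC).integrableOn_isCompact isCompact_uIcc).intervalIntegrable
  refine LipschitzWith.of_dist_le_mul fun x y => ?_
  rw [Real.dist_eq, Real.dist_eq,
    intervalIntegral.integral_interval_sub_left (hint c x) (hint c y),
    Real.coe_toNNReal _ ((abs_nonneg _).trans (hC 0))]
  exact intervalIntegral.norm_integral_le_of_norm_le_const (f := g) fun t _ => hC t

end Primitive

lemma LipschitzWith.mul_sub_le_sub_of_ae_hasDerivAt {f g : ℝ → ℝ} {K : NNReal}
    (hf : LipschitzWith K f) (hfg : ∀ᵐ x, HasDerivAt f (g x) x) {m : ℝ} (hm : ∀ x, m ≤ g x)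
    {u v : ℝ} (huv : u ≤ v) : m * (v - u) ≤ f v - f u := by
  have hac := (hf.lipschitzOnWith (s := uIcc u v)).absolutelyContinuousOnInterval
  calc m * (v - u) = ∫ _ in u..v, m := by simp [mul_comm]
    _ ≤ ∫ x in u..v, deriv f x := by
        refine intervalIntegral.integral_mono_ae huv intervalIntegrable_const
          hac.intervalIntegrable_deriv ?_
        filter_upwards [hfg] with x hx
        rw [hx.deriv]
        exact hm x
    _ = f v - f u := hac.integral_deriv_eq_sub

section LowerIncrement

variable {f : ℝ → ℝ} {m : ℝ}

lemma strictMono_of_mul_sub_le (hm : 0 < m) (hf : ∀ u v, u ≤ v → m * (v - u) ≤ f v - f u) :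
    StrictMono f := fun u v huv => by nlinarith [hf u v huv.le]

lemma antilipschitzWith_of_mul_sub_le (hm : 0 < m)
    (hf : ∀ u v, u ≤ v → m * (v - u) ≤ f v - f u) : AntilipschitzWith m⁻¹.toNNReal f := by
  refine AntilipschitzWith.of_le_mul_dist fun x y => ?_
  rw [Real.coe_toNNReal _ (inv_nonneg.2 hm.le), Real.dist_eq, Real.dist_eq, ← div_eq_inv_mul,
    le_div_iff₀ hm]
  wlog hxy : x ≤ y generalizing x y
  · rw [abs_sub_comm, abs_sub_comm (f x)]
    exact this y x (le_of_not_ge hxy)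
  have := hf x y hxy
  rw [abs_of_nonpos (sub_nonpos.2 hxy), abs_of_nonpos (by nlinarith)]
  linarith

lemma surjective_of_mul_sub_le (hm : 0 < m) (hf : ∀ u v, u ≤ v → m * (v - u) ≤ f v - f u)
    (hcont : Continuous f) : Surjective f := by
  refine hcont.surjective ?_ ?_
  · refine tendsto_atTop_mono' _ ?_
      (tendsto_atTop_add_const_left _ (f 0) (tendsto_id.const_mul_atTop hm))
    filter_upwards [eventually_ge_atTop 0] with x hx
    dsimp only [id]
    linarith [hf 0 x hx]
  · refine tendsto_atBot_mono' _ ?_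
      (tendsto_atBot_add_const_left _ (f 0) (tendsto_id.const_mul_atBot hm))
    filter_upwards [eventually_le_atBot 0] with x hx
    dsimp only [id]
    linarith [hf x 0 hx]

end LowerIncrement

theorem LipschitzWith.strictMono_bijective_invFun_of_ae_hasDerivAt {f g : ℝ → ℝ} {K : NNReal}
    (hf : LipschitzWith K f) (hfg : ∀ᵐ x, HasDerivAt f (g x) x) {m : ℝ} (hm : 0 < m)
    (hmg : ∀ x, m ≤ g x) :
    StrictMono f ∧ Bijective f ∧ (∃ L : NNReal, LipschitzWith L (invFun f)) ∧
      StrictMono (invFun f) := by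
  have hinc (u v : ℝ) (huv : u ≤ v) := hf.mul_sub_le_sub_of_ae_hasDerivAt hfg hmg huv
  have hmono := strictMono_of_mul_sub_le hm hinc
  have hsurj := surjective_of_mul_sub_le hm hinc hf.continuous
  have hinv : RightInverse (invFun f) f := rightInverse_invFun hsurj
  refine ⟨hmono, ⟨hmono.injective, hsurj⟩,
    ⟨_, (antilipschitzWith_of_mul_sub_le hm hinc).to_rightInverse hinv⟩, fun u v huv => ?_⟩
  exact hmono.lt_iff_lt.1 (by rwa [hinv u, hinv v])

lemma div_le_sub_div_sub_of_mem_Icc {a b c d A B u l : ℝ} (hbc : b < c) (hA : A ∈ Icc c d)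
    (hB : B ∈ Icc a b) (hu : u ∈ Icc c d) (hl : l ∈ Icc a b) :
    (c - b) / (d - a) ≤ (A - B) / (u - l) :=
  div_le_div₀ (by linarith [hA.1, hB.2]) (by linarith [hA.1, hB.2]) (by linarith [hu.1, hl.2])
    (by linarith [hu.2, hl.1])

lemma ae_comp_of_lipschitzWith_leftInverse {Z X : ℝ → ℝ} {K : NNReal}
    (hX : LipschitzWith K X) (hXZ : LeftInverse X Z) {p : ℝ → Prop} (hp : ∀ᵐ y, p y) :
    ∀ᵐ x, p (Z x) := by
  have hnull := (hX.lipschitzOnWith (s := {y | ¬p y})).hausdorffMeasure_image_le zero_le_one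
  rw [hausdorffMeasure_real, ENNReal.rpow_one] at hnull
  have hsub : {x | ¬p (Z x)} ⊆ X '' {y | ¬p y} := fun x hx => ⟨Z x, hx, hXZ x⟩
  refine ae_iff.2 (measure_mono_null hsub (le_antisymm ?_ bot_le))
  exact hnull.trans (by rw [ae_iff.1 hp, mul_zero])

lemma ae_hasDerivAt_primitive_comp {Z X ρ f : ℝ → ℝ} {K : NNReal} (hX : LipschitzWith K X)
    (hXZ : LeftInverse X Z) (hZ : ∀ᵐ x, HasDerivAt Z (ρ x) x) (hf : LocallyIntegrable f)
    (c : ℝ) : ∀ᵐ x, HasDerivAt (fun x => ∫ t in c..Z x, f t) (f (Z x) * ρ x) x := by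
  filter_upwards [hZ, ae_comp_of_lipschitzWith_leftInverse hX hXZ
    (LocallyIntegrable.ae_hasDerivAt_integral hf)] with x hZx hFx
  exact (hFx c).comp x hZx

lemma lipschitzWith_primitive_and_rightInverse {ρ Z X : ℝ → ℝ} {m M : ℝ}
    (hρ : AEStronglyMeasurable ρ) (hm : 0 < m) (hmρ : ∀ x, m ≤ ρ x) (hρM : ∀ x, ρ x ≤ M)
    (hZ : ∀ x, Z x = ∫ t in (0 : ℝ)..x, ρ t) (hZX : RightInverse X Z) :
    LipschitzWith M.toNNReal Z ∧ (∀ᵐ x, HasDerivAt Z (ρ x) x) ∧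
      LipschitzWith m⁻¹.toNNReal X := by
  have hM (x : ℝ) : |ρ x| ≤ M := abs_le.2 ⟨by linarith [hmρ x, hρM x], hρM x⟩
  have hZlip : LipschitzWith M.toNNReal Z := by
    rw [funext hZ]
    exact lipschitzWith_primitive hρ hM 0
  have hZ' : ∀ᵐ x, HasDerivAt Z (ρ x) x := by
    rw [funext hZ]
    filter_upwards [LocallyIntegrable.ae_hasDerivAt_integral
      (locallyIntegrable_of_abs_le hρ hM)] with x hx
    exact hx 0
  refine ⟨hZlip, hZ', (antilipschitzWith_of_mul_sub_le hm fun u v huv => ?_).to_rightInverse hZX⟩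
  exact hZlip.mul_sub_le_sub_of_ae_hasDerivAt hZ' hmρ huv

theorem strictMono_bijective_invFun_of_eq_add_mul_primitive_comp {Φ Z X ρ f g : ℝ → ℝ}
    {KZ KX : NNReal} {s c k C m : ℝ} (hZ : LipschitzWith KZ Z) (hX : LipschitzWith KX X)
    (hXZ : LeftInverse X Z) (hZ' : ∀ᵐ x, HasDerivAt Z (ρ x) x) (hf : AEStronglyMeasurable f)
    (hC : ∀ y, |f y| ≤ C) (hΦ : ∀ x, Φ x = x + s * ((∫ t in c..Z x, f t) - k))
    (hg : ∀ x, 1 + s * (f (Z x) * ρ x) = g x) (hm : 0 < m) (hmg : ∀ x, m ≤ g x) :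
    (∃ L : NNReal, LipschitzWith L Φ) ∧ StrictMono Φ ∧ Bijective Φ ∧
      (∀ᵐ x, HasDerivAt Φ (g x) x) ∧ (∃ L : NNReal, LipschitzWith L (invFun Φ)) ∧
      StrictMono (invFun Φ) := by
  obtain ⟨L, hΦlip⟩ : ∃ L, LipschitzWith L Φ := by
    rw [funext hΦ]
    exact ⟨_, LipschitzWith.id.add ((lipschitzWith_smul s).comp
      (((lipschitzWith_primitive hf hC c).comp hZ).sub (LipschitzWith.const k)))⟩
  have hΦ' : ∀ᵐ x, HasDerivAt Φ (g x) x := by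
    rw [funext hΦ]
    filter_upwards [ae_hasDerivAt_primitive_comp hX hXZ hZ'
      (locallyIntegrable_of_abs_le hf hC) c] with x hx
    exact ((hasDerivAt_id x).add ((hx.sub_const k).const_mul s)).congr_deriv (hg x)
  obtain ⟨hmono, hbij, hinv⟩ := hΦlip.strictMono_bijective_invFun_of_ae_hasDerivAt hΦ' hm hmg
  exact ⟨⟨L, hΦlip⟩, hmono, hbij, hΦ', hinv⟩

theorem stmt_16
    (a : ℝ) (ha : 0 < a)
    (lam0 mu0 : ℝ → ℝ) (hlm : Measurable lam0) (hmm : Measurable mu0)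
    (hlbdd : BddAbove (Set.range lam0)) (hlbdd' : BddBelow (Set.range lam0))
    (hmbdd : BddAbove (Set.range mu0)) (hmbdd' : BddBelow (Set.range mu0))
    (hsep : sSup (Set.range lam0) < sInf (Set.range mu0))
    (lbar mbar : ℝ)
    (hllim : Tendsto lam0 atBot (nhds lbar))
    (hmlim : Tendsto mu0 atTop (nhds mbar))
    (Z0 X0 : ℝ → ℝ)
    (hZ0 : ∀ x, Z0 x = ∫ ξ in (0:ℝ)..x, 2 * a / (mu0 ξ - lam0 ξ))
    (hX0Z0 : ∀ x, X0 (Z0 x) = x) (hZ0X0 : ∀ z, Z0 (X0 z) = z)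
    (H I : ℝ → ℝ)
    (hH : ∀ y, H y = ∫ ξ in (1:ℝ)..y, (lam0 (X0 ξ) - lbar))
    (hI : ∀ y, I y = ∫ ξ in (1:ℝ)..y, (mu0 (X0 ξ) - mbar))
    (Hbar Ibar : ℝ)
    (ψ φ : ℝ → ℝ)
    (hψ : ∀ x, ψ x = x + (1 / (2 * a)) * (H (Z0 x) - Hbar))
    (hφ : ∀ x, φ x = x - (1 / (2 * a)) * (I (Z0 x) - Ibar)) :
    (∃ L : NNReal, LipschitzWith L ψ) ∧ StrictMono ψ ∧ Function.Bijective ψ ∧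
    (∃ L : NNReal, LipschitzWith L φ) ∧ StrictMono φ ∧ Function.Bijective φ ∧
    (∀ᵐ x : ℝ, HasDerivAt ψ ((mu0 x - lbar) / (mu0 x - lam0 x)) x) ∧
    (∀ᵐ x : ℝ, HasDerivAt φ ((mbar - lam0 x) / (mu0 x - lam0 x)) x) ∧
    (0 < (sInf (Set.range mu0) - sSup (Set.range lam0))
        / (sSup (Set.range mu0) - sInf (Set.range lam0))) ∧
    (∀ x : ℝ, (sInf (Set.range mu0) - sSup (Set.range lam0))
        / (sSup (Set.range mu0) - sInf (Set.range lam0))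
        ≤ (mu0 x - lbar) / (mu0 x - lam0 x)) ∧
    (∀ x : ℝ, (sInf (Set.range mu0) - sSup (Set.range lam0))
        / (sSup (Set.range mu0) - sInf (Set.range lam0))
        ≤ (mbar - lam0 x) / (mu0 x - lam0 x)) ∧
    (∃ L : NNReal, LipschitzWith L (Function.invFun ψ)) ∧
    StrictMono (Function.invFun ψ) ∧
    (∃ L : NNReal, LipschitzWith L (Function.invFun φ)) ∧
    StrictMono (Function.invFun φ) := by
  have hlam (x : ℝ) : lam0 x ∈ Icc (sInf (range lam0)) (sSup (range lam0)) :=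
    ⟨csInf_le hlbdd' ⟨x, rfl⟩, le_csSup hlbdd ⟨x, rfl⟩⟩
  have hmu (x : ℝ) : mu0 x ∈ Icc (sInf (range mu0)) (sSup (range mu0)) :=
    ⟨csInf_le hmbdd' ⟨x, rfl⟩, le_csSup hmbdd ⟨x, rfl⟩⟩
  have hlbar := isClosed_Icc.mem_of_tendsto hllim (Eventually.of_forall hlam)
  have hmbar := isClosed_Icc.mem_of_tendsto hmlim (Eventually.of_forall hmu)
  have hgap (x : ℝ) : 0 < mu0 x - lam0 x := by linarith [(hlam x).2, (hmu x).1]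
  have hψ'_ge (x : ℝ) := div_le_sub_div_sub_of_mem_Icc hsep (hmu x) hlbar (hmu x) (hlam x)
  have hφ'_ge (x : ℝ) := div_le_sub_div_sub_of_mem_Icc hsep hmbar (hlam x) (hmu x) (hlam x)
  have hΔ : 0 < sSup (range mu0) - sInf (range lam0) := by
    linarith [(hlam 0).1, (hmu 0).2, hgap 0]
  have hm := div_pos (sub_pos.2 hsep) hΔ
  have ha2 : 0 < 2 * a := by linarith
  obtain ⟨hZlip, hZ', hXlip⟩ := lipschitzWith_primitive_and_rightInverse
    (ρ := fun x => 2 * a / (mu0 x - lam0 x))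
    (measurable_const.div (hmm.sub hlm)).aestronglyMeasurable (div_pos ha2 hΔ)
    (fun x => div_le_div_of_nonneg_left ha2.le (hgap x) (by linarith [(hlam x).1, (hmu x).2]))
    (fun x => div_le_div_of_nonneg_left ha2.le (sub_pos.2 hsep)
      (by linarith [(hlam x).2, (hmu x).1])) hZ0 hZ0X0
  obtain ⟨hψlip, hψmono, hψbij, hψ', hψinvlip, hψinvmono⟩ :=
    strictMono_bijective_invFun_of_eq_add_mul_primitive_comp (Φ := ψ) (s := 1 / (2 * a))
      (c := 1) (k := Hbar) (f := fun ξ => lam0 (X0 ξ) - lbar)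
      (C := sSup (range lam0) - sInf (range lam0)) hZlip hXlip hX0Z0 hZ'
      ((hlm.comp hXlip.continuous.measurable).sub_const lbar).aestronglyMeasurable
      (fun y => Real.dist_le_of_mem_Icc (hlam (X0 y)) hlbar)
      (fun x => by rw [hψ, hH])
      (fun x => by rw [hX0Z0]; field_simp [(hgap x).ne']; ring) hm hψ'_ge
  obtain ⟨hφlip, hφmono, hφbij, hφ', hφinvlip, hφinvmono⟩ :=
    strictMono_bijective_invFun_of_eq_add_mul_primitive_comp (Φ := φ) (s := -(1 / (2 * a)))
      (c := 1) (k := Ibar) (f := fun ξ => mu0 (X0 ξ) - mbar)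
      (C := sSup (range mu0) - sInf (range mu0)) hZlip hXlip hX0Z0 hZ'
      ((hmm.comp hXlip.continuous.measurable).sub_const mbar).aestronglyMeasurable
      (fun y => Real.dist_le_of_mem_Icc (hmu (X0 y)) hmbar)
      (fun x => by rw [hφ, hI]; ring)
      (fun x => by rw [hX0Z0]; field_simp [(hgap x).ne']; ring) hm hφ'_ge
  exact ⟨hψlip, hψmono, hψbij, hφlip, hφmono, hφbij, hψ', hφ', hm, hψ'_ge, hφ'_ge,
    hψinvlip, hψinvmono, hφinvlip, hφinvmono⟩
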